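/- Let Q be a unital stably Gelfand quantal frame satisfying ⋁I(Q) = 1. Then Q satisfies the support axioms of an inverse quantal frame: for all a ∈ Q, a1 ∧ e ≤ aa* and a ≤ (a1 ∧ e)a. -/

import Mathlib

/-- An involutive quantale: a complete lattice with an associative multiplication
distributing over arbitrary joins in each variable, and a join-preserving
involution that is an anti-automorphism of period 2. -/
class InvQuantale (Q : Type*) extends CompleteLattice Q, Semigroup Q, StarMul Q where
  mul_sSup : ∀ (a : Q) (S : Set Q), a * sSup S = ⨆ s ∈ S, a * s
  sSup_mul : ∀ (S : Set Q) (a : Q), sSup S * a = ⨆ s ∈ S, s * a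
  star_sSup : ∀ (S : Set Q), star (sSup S) = ⨆ s ∈ S, star s

/-- The set `I_b(Q)` of partial units relative to `b`. -/
def Ib {Q : Type*} [InvQuantale Q] (b : Q) : Set Q :=
  {a | star a * a ≤ b ∧ a * star a ≤ b ∧ a * b ≤ a ∧ b * a ≤ a}

/-- `Q` is stably Gelfand if `a a* a ≤ a` implies `a a* a = a`. -/
def IsStablyGelfand (Q : Type*) [InvQuantale Q] : Prop :=
  ∀ a : Q, a * star a * a ≤ a → a * star a * a = a


/-!
Since the partial units cover `Q` and `Q` is a frame, both inequalities may be checked on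
the pieces `a s ⊓ e` and `a ⊓ s` with `s` a partial unit. Each such piece `b` satisfies
`b b* b ≤ b` (for `a s ⊓ e` because it lies below `e = e*`; for `a ⊓ s` because
`s s* s ≤ s` and `a s* s ≤ a`), so stable Gelfandness gives `b = b b* b`, from which
`b ≤ b b*` and `b ≤ (b b*) b` follow and are compared with `a a*` and `(a ⊤ ⊓ e) a`.
-/

theorem monotone_of_map_sSup {α β : Type*} [CompleteLattice α] [CompleteLattice β]
    {f : α → β} (hf : ∀ S : Set α, f (sSup S) = ⨆ s ∈ S, f s) : Monotone f := fun a b h => by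
  rw [← sup_eq_right.mpr h, ← sSup_pair, hf, iSup_pair]
  exact le_sup_left

namespace InvQuantale

variable {Q : Type*} [InvQuantale Q]

theorem star_monotone : Monotone (star : Q → Q) := monotone_of_map_sSup star_sSup

instance : MulLeftMono Q := ⟨fun c _ _ h => monotone_of_map_sSup (mul_sSup c) h⟩

instance : MulRightMono Q := ⟨fun c _ _ h => monotone_of_map_sSup (sSup_mul · c) h⟩

end InvQuantale

namespace IsStablyGelfand

open InvQuantale

variable {Q : Type*} [InvQuantale Q] {e : Q}

theorem le_mul_star_of_le_unit (hsg : IsStablyGelfand Q) (he : ∀ a : Q, a * e = a)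
    (he_star : star e = e) {t : Q} (ht : t ≤ e) : t ≤ t * star t := by
  have ht_star : star t ≤ e := he_star ▸ star_monotone ht
  have hfix : t * star t * t = t := hsg t <| calc
    t * star t * t ≤ t * e * t := by gcongr
    _ = t * t := by rw [he]
    _ ≤ t * e := by gcongr
    _ = t := he t
  calc t = t * star t * t := hfix.symm
    _ ≤ t * star t * e := by gcongr
    _ = t * star t := he _

theorem mul_inf_unit_le_mul_star (hsg : IsStablyGelfand Q) (he : ∀ a : Q, a * e = a)
    (he_star : star e = e) {s : Q} (hs : s * star s ≤ e) (a : Q) :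
    a * s ⊓ e ≤ a * star a :=
  calc a * s ⊓ e ≤ (a * s ⊓ e) * star (a * s ⊓ e) :=
        hsg.le_mul_star_of_le_unit he he_star inf_le_right
    _ ≤ a * s * star (a * s) := mul_le_mul' inf_le_left (star_monotone inf_le_left)
    _ = a * (s * star s) * star a := by rw [star_mul, mul_assoc, mul_assoc, mul_assoc]
    _ ≤ a * e * star a := by gcongr
    _ = a * star a := by rw [he]

theorem inf_le_support_mul (hsg : IsStablyGelfand Q) (he_left : ∀ a : Q, e * a = a)
    (he_right : ∀ a : Q, a * e = a) {s : Q} (hs₁ : star s * s ≤ e) (hs₂ : s * star s ≤ e)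
    (a : Q) : a ⊓ s ≤ (a * ⊤ ⊓ e) * a := by
  set b := a ⊓ s
  have hb_star : star b ≤ star s := star_monotone inf_le_right
  have hfix : b * star b * b = b := hsg b <| le_inf
    (calc b * star b * b ≤ a * star s * s :=
          mul_le_mul' (mul_le_mul' inf_le_left hb_star) inf_le_right
      _ = a * (star s * s) := mul_assoc _ _ _
      _ ≤ a * e := by gcongr
      _ = a := he_right a)
    (calc b * star b * b ≤ s * star s * s :=
          mul_le_mul' (mul_le_mul' inf_le_right hb_star) inf_le_right
      _ ≤ e * s := by gcongr
      _ = s := he_left s)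
  have hsupport : b * star b ≤ a * ⊤ ⊓ e :=
    le_inf (mul_le_mul' inf_le_left le_top) ((mul_le_mul' inf_le_right hb_star).trans hs₂)
  calc b = b * star b * b := hfix.symm
    _ ≤ (a * ⊤ ⊓ e) * a := mul_le_mul' hsupport inf_le_left

end IsStablyGelfand

theorem support_axioms {Q : Type*} [InvQuantale Q]
    (hsg : IsStablyGelfand Q)
    (hframe : ∀ (a : Q) (S : Set Q), a ⊓ sSup S = ⨆ s ∈ S, a ⊓ s)
    (e : Q) (he1 : ∀ a : Q, e * a = a) (he2 : ∀ a : Q, a * e = a)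
    (he3 : star e = e)
    (hcov : sSup {s : Q | star s * s ≤ e ∧ s * star s ≤ e} = ⊤) :
    ∀ a : Q, a * ⊤ ⊓ e ≤ a * star a ∧ a ≤ (a * ⊤ ⊓ e) * a := by
  intro a
  let _ : Order.Frame Q := .ofMinimalAxioms ⟨fun b S => (hframe b S).le⟩
  set I := {s : Q | star s * s ≤ e ∧ s * star s ≤ e}
  constructor
  · calc a * ⊤ ⊓ e = ⨆ s ∈ I, a * s ⊓ e := by rw [← hcov, InvQuantale.mul_sSup, iSup₂_inf_eq]
      _ ≤ a * star a := iSup₂_le fun s hs => hsg.mul_inf_unit_le_mul_star he2 he3 hs.2 a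
  · calc a = ⨆ s ∈ I, a ⊓ s := by rw [← inf_sSup_eq, hcov, inf_top_eq]
      _ ≤ (a * ⊤ ⊓ e) * a := iSup₂_le fun s hs => hsg.inf_le_support_mul he1 he2 hs.1 hs.2 a
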